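/- Let f : X → ℝ be Hölder continuous admitting a unique maximizing measure, let V be a calibrated subaction for f, and set R = R_− = f + V − V∘σ − β(f). For each c > 0 let h_c : X → (0,∞) be continuous and β_c > 0 be such that g_c := c f + log h_c − log h_c∘σ − log β_c satisfies (L_{g_c} 1)(x) = 1 for all x ∈ X; assume sup_{x∈X} |log h_c(x) − c V(x)| / c → 0 as c → ∞, and that ε_c := log β_c − c β(f) satisfies ε_c / c → 0. Then for every fixed k ∈ ℕ and every fixed x ∈ X, lim_{c,n→∞} ( (1/c) log (L_{cR}^n 1)(x) − (1/c) log (L_{cR}^{n+k} 1)(x) ) = 0. -/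

import Mathlib

open MeasureTheory Filter Topology Set ENNReal

noncomputable section

namespace GXY

variable {M : Type*}

/-- The shift map on the sequence space `ℕ → M`. -/
def shift (x : ℕ → M) : ℕ → M := fun n => x (n + 1)

/-- Prepending a symbol `a` to a sequence `x`. -/
def cons (a : M) (x : ℕ → M) : ℕ → M := fun n => Nat.casesOn n a x

/-- The metric `d(x,y) = ∑ θ^n d_M(x_n, y_n)` on `ℕ → M`. -/
def D [MetricSpace M] (θ : ℝ) (x y : ℕ → M) : ℝ := ∑' n, θ ^ n * dist (x n) (y n)

/-- Hölder continuity with respect to the metric `D θ`. -/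
def IsHolder [MetricSpace M] (θ : ℝ) (f : (ℕ → M) → ℝ) : Prop :=
  ∃ C > (0 : ℝ), ∃ α ∈ Set.Ioc (0 : ℝ) 1, ∀ x y, |f x - f y| ≤ C * (D θ x y) ^ α

/-- Shift-invariant Borel probability measures on `ℕ → M`. -/
def IsInvProb [MetricSpace M] [MeasurableSpace M] (μ : Measure (ℕ → M)) : Prop :=
  IsProbabilityMeasure μ ∧ μ.map shift = μ

/-- The maximal ergodic average `β(f)`. -/
def betaF [MetricSpace M] [MeasurableSpace M] (f : (ℕ → M) → ℝ) : ℝ :=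
  sSup { r | ∃ μ : Measure (ℕ → M), IsInvProb μ ∧ r = ∫ x, f x ∂μ }

/-- A maximizing measure for `f`. -/
def IsMaximizing [MetricSpace M] [MeasurableSpace M] (f : (ℕ → M) → ℝ)
    (μ : Measure (ℕ → M)) : Prop :=
  IsInvProb μ ∧ ∫ x, f x ∂μ = betaF f

/-- A calibrated subaction `V` for `f`:
`V y = max_{σ x = y} (f x + V x - β f)` for every `y`. -/
def IsCalibrated [MetricSpace M] [MeasurableSpace M] (f V : (ℕ → M) → ℝ) : Prop :=
  Continuous V ∧
    ∀ y, IsGreatest { t | ∃ x, shift x = y ∧ t = f x + V x - betaF f } (V y)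

/-- The Ruelle transfer operator `(L_g w)(x) = ∫_M e^{g(ax)} w(ax) dm(a)`. -/
def Ruelle [MetricSpace M] [MeasurableSpace M] (m : Measure M) (g w : (ℕ → M) → ℝ) :
    (ℕ → M) → ℝ :=
  fun x => ∫ a, Real.exp (g (cons a x)) * w (cons a x) ∂m

/-- `R₊ = β(f) + V ∘ σ - V - f ≥ 0`. -/
def Rplus [MetricSpace M] [MeasurableSpace M] (f V : (ℕ → M) → ℝ) (x : ℕ → M) : ℝ :=
  betaF f + V (shift x) - V x - f x

/-- `R₊^∞(z) = ∑_{j≥0} R₊(σ^j z) ∈ [0,∞]`. -/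
def RplusInf [MetricSpace M] [MeasurableSpace M] (f V : (ℕ → M) → ℝ) (z : ℕ → M) : ℝ≥0∞ :=
  ∑' j : ℕ, ENNReal.ofReal (Rplus f V (shift^[j] z))

/-- `R₋ = f + V - V ∘ σ - β(f) ≤ 0`. -/
def Rminus [MetricSpace M] [MeasurableSpace M] (f V : (ℕ → M) → ℝ) (x : ℕ → M) : ℝ :=
  f x + V x - V (shift x) - betaF f

/-- The Birkhoff sum `R₋^k = ∑_{j<k} R₋ ∘ σ^j`. -/
def RminusBirk [MetricSpace M] [MeasurableSpace M] (f V : (ℕ → M) → ℝ) (k : ℕ)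
    (z : ℕ → M) : ℝ :=
  ∑ j ∈ Finset.range k, Rminus f V (shift^[j] z)

/-- Extended-real logarithm with the convention `log 0 = -∞`. -/
def elog (t : ℝ) : EReal := if t = 0 then ⊥ else ((Real.log t : ℝ) : EReal)

/-!
Write `ψ = c V - log h_c` and `e = log β_c - c β(f)`. Then `c R₋ = g_c + ψ - ψ ∘ σ + e`, so
`L_{cR}^n 1 = e^{n e - ψ} L_{g_c}^n (e^ψ)`. Since `L_{g_c}` is normalized it is an averaging
operator, hence `L_{g_c}^n (e^ψ)` takes values in `[e^{-sup|ψ|}, e^{sup|ψ|}]` for every `n`.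
Therefore `|log L_{cR}^n 1 (x) - log L_{cR}^{n+k} 1 (x)| ≤ 2 sup|ψ| + k |e|`, uniformly in `n`,
and both `sup|ψ|` and `e` are `o(c)`.
-/

lemma shift_cons (a : M) (x : ℕ → M) : shift (cons a x) = x := rfl

section SequenceSpace

variable [TopologicalSpace M]

lemma continuous_shift : Continuous (shift : (ℕ → M) → ℕ → M) :=
  continuous_pi fun n => continuous_apply (n + 1)

lemma continuous_cons : Continuous fun p : M × (ℕ → M) => cons p.1 p.2 := by
  refine continuous_pi fun n => ?_
  cases n with
  | zero => exact continuous_fst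
  | succ n => exact (continuous_apply n).comp continuous_snd

end SequenceSpace

section Holder

variable [MetricSpace M]

lemma tendsto_D_self (hdiam : ∀ a b : M, dist a b ≤ 1) {θ : ℝ} (hθ : θ ∈ Set.Ioo (0 : ℝ) 1)
    (x : ℕ → M) : Tendsto (D θ x) (𝓝 x) (𝓝 0) := by
  have hlim : Tendsto (D θ x) (𝓝 x) (𝓝 (∑' n : ℕ, θ ^ n * dist (x n) (x n))) := by
    refine tendsto_tsum_of_dominated_convergence (bound := fun n => θ ^ n)
      (summable_geometric_of_lt_one hθ.1.le hθ.2) (fun n => ?_) (Eventually.of_forall ?_)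
    · exact ((continuous_const.dist (continuous_apply n)).const_mul (θ ^ n)).tendsto x
    · intro y n
      rw [Real.norm_of_nonneg (by have := hθ.1; positivity)]
      exact mul_le_of_le_one_right (pow_nonneg hθ.1.le n) (hdiam _ _)
  simpa using hlim

lemma IsHolder.continuous (hdiam : ∀ a b : M, dist a b ≤ 1) {θ : ℝ}
    (hθ : θ ∈ Set.Ioo (0 : ℝ) 1) {f : (ℕ → M) → ℝ} (hf : IsHolder θ f) : Continuous f := by
  obtain ⟨C, -, α, hα, hfD⟩ := hf
  refine continuous_iff_continuousAt.mpr fun x => tendsto_iff_dist_tendsto_zero.mpr ?_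
  have hbound : Tendsto (fun y => C * D θ x y ^ α) (𝓝 x) (𝓝 0) := by
    simpa [Real.zero_rpow hα.1.ne'] using
      ((Real.continuousAt_rpow_const 0 α (Or.inr hα.1.le)).tendsto.comp
        (tendsto_D_self hdiam hθ x)).const_mul C
  refine squeeze_zero (fun y => dist_nonneg) (fun y => ?_) hbound
  rw [Real.dist_eq, abs_sub_comm]
  exact hfD x y

end Holder

section Ruelle

variable [MetricSpace M] [MeasurableSpace M] (m : Measure M)

lemma ruelle_iterate_eq_of_cohomologous {g φ ψ : (ℕ → M) → ℝ} {e : ℝ}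
    (hφ : ∀ y, φ y = g y + ψ y - ψ (shift y) + e) (n : ℕ) (w : (ℕ → M) → ℝ) (z : ℕ → M) :
    (Ruelle m φ)^[n] w z =
      Real.exp (n * e - ψ z) * (Ruelle m g)^[n] (fun y => Real.exp (ψ y) * w y) z := by
  induction n generalizing z with
  | zero => simp [← mul_assoc, ← Real.exp_add]
  | succ n ih =>
    rw [Function.iterate_succ_apply', Function.iterate_succ_apply', Ruelle, Ruelle,
      ← integral_const_mul]
    congr 1 with a
    rw [ih, ← mul_assoc, ← Real.exp_add, ← mul_assoc, ← Real.exp_add, hφ, shift_cons]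
    push_cast
    ring_nf

variable [CompactSpace M] [BorelSpace M] [IsFiniteMeasure m]

lemma continuous_ruelle {g w : (ℕ → M) → ℝ} (hg : Continuous g) (hw : Continuous w) :
    Continuous (Ruelle m g w) := by
  have hF : Continuous (Function.uncurry fun x a => Real.exp (g (cons a x)) * w (cons a x)) :=
    have hcons := continuous_cons.comp continuous_swap
    (hg.comp hcons).rexp.mul (hw.comp hcons)
  have hcont := continuous_parametric_integral_of_continuous hF isCompact_univ (μ := m)
  rwa [Measure.restrict_univ] at hcont

lemma ruelle_mem_Icc {g w : (ℕ → M) → ℝ} (hg : Continuous g) (hw : Continuous w)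
    (hnorm : ∀ x, Ruelle m g (fun _ => 1) x = 1) {lo hi : ℝ} (hwIcc : ∀ z, w z ∈ Icc lo hi)
    (x : ℕ → M) : Ruelle m g w x ∈ Icc lo hi := by
  have hcont : Continuous fun a => cons a x := continuous_cons.comp (.prodMk_left x)
  have hint {v : (ℕ → M) → ℝ} (hv : Continuous v) :
      Integrable (fun a => Real.exp (g (cons a x)) * v (cons a x)) m :=
    ((hg.comp hcont).rexp.mul (hv.comp hcont)).integrable_of_hasCompactSupport
      (.of_compactSpace _)
  have hconst (t : ℝ) : Ruelle m g (fun _ => t) x = t := by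
    simpa [Ruelle, integral_mul_const] using congrArg (· * t) (hnorm x)
  constructor
  · calc lo = Ruelle m g (fun _ => lo) x := (hconst lo).symm
      _ ≤ Ruelle m g w x := integral_mono (hint continuous_const) (hint hw) fun a =>
          mul_le_mul_of_nonneg_left (hwIcc _).1 (Real.exp_pos _).le
  · calc Ruelle m g w x ≤ Ruelle m g (fun _ => hi) x :=
          integral_mono (hint hw) (hint continuous_const) fun a =>
            mul_le_mul_of_nonneg_left (hwIcc _).2 (Real.exp_pos _).le
      _ = hi := hconst hi

lemma ruelle_iterate_continuous_and_mem_Icc {g w : (ℕ → M) → ℝ} (hg : Continuous g)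
    (hw : Continuous w) (hnorm : ∀ x, Ruelle m g (fun _ => 1) x = 1) {lo hi : ℝ}
    (hwIcc : ∀ z, w z ∈ Icc lo hi) (n : ℕ) :
    Continuous ((Ruelle m g)^[n] w) ∧ ∀ z, (Ruelle m g)^[n] w z ∈ Icc lo hi := by
  induction n with
  | zero => exact ⟨hw, hwIcc⟩
  | succ n ih =>
    rw [Function.iterate_succ_apply']
    exact ⟨continuous_ruelle m hg ih.1, ruelle_mem_Icc m hg ih.1 hnorm ih.2⟩

lemma ruelle_iterate_exp_mem_Icc {g ψ : (ℕ → M) → ℝ} (hg : Continuous g)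
    (hψ : Continuous ψ) (hnorm : ∀ x, Ruelle m g (fun _ => 1) x = 1) {B : ℝ}
    (hB : ∀ y, |ψ y| ≤ B) (n : ℕ) (x : ℕ → M) :
    (Ruelle m g)^[n] (fun y => Real.exp (ψ y)) x ∈ Icc (Real.exp (-B)) (Real.exp B) :=
  (ruelle_iterate_continuous_and_mem_Icc m hg hψ.rexp hnorm (fun y =>
    ⟨Real.exp_le_exp.mpr (neg_le_of_abs_le (hB y)), Real.exp_le_exp.mpr (le_of_abs_le (hB y))⟩)
    n).2 x

lemma abs_log_ruelle_iterate_sub_le_of_cohomologous {g φ ψ : (ℕ → M) → ℝ} {e B : ℝ}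
    (hg : Continuous g) (hψ : Continuous ψ) (hnorm : ∀ x, Ruelle m g (fun _ => 1) x = 1)
    (hφ : ∀ y, φ y = g y + ψ y - ψ (shift y) + e) (hB : ∀ y, |ψ y| ≤ B) (n k : ℕ)
    (x : ℕ → M) :
    |Real.log ((Ruelle m φ)^[n] (fun _ => 1) x) - Real.log ((Ruelle m φ)^[n + k] (fun _ => 1) x)|
      ≤ 2 * B + k * |e| := by
  have hlog (j : ℕ) : Real.log ((Ruelle m φ)^[j] (fun _ => 1) x) =
      j * e - ψ x + Real.log ((Ruelle m g)^[j] (fun y => Real.exp (ψ y)) x) := by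
    have hpos := (Real.exp_pos _).trans_le (ruelle_iterate_exp_mem_Icc m hg hψ hnorm hB j x).1
    simp only [ruelle_iterate_eq_of_cohomologous m hφ, mul_one]
    rw [Real.log_mul (Real.exp_ne_zero _) hpos.ne', Real.log_exp]
  have hbound (j : ℕ) : |Real.log ((Ruelle m g)^[j] (fun y => Real.exp (ψ y)) x)| ≤ B := by
    obtain ⟨hlo, hhi⟩ := ruelle_iterate_exp_mem_Icc m hg hψ hnorm hB j x
    have hpos := (Real.exp_pos _).trans_le hlo
    exact abs_le.mpr ⟨(Real.le_log_iff_exp_le hpos).mpr hlo, (Real.log_le_iff_le_exp hpos).mpr hhi⟩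
  have hke : |(k : ℝ) * e| = k * |e| := by rw [abs_mul, Nat.abs_cast]
  calc _ = |Real.log ((Ruelle m g)^[n] (fun y => Real.exp (ψ y)) x)
          - Real.log ((Ruelle m g)^[n + k] (fun y => Real.exp (ψ y)) x) - k * e| := by
        rw [hlog, hlog]
        push_cast
        ring_nf
    _ ≤ B + B + k * |e| := by
        rw [← hke]
        exact (abs_sub _ _).trans (add_le_add ((abs_sub _ _).trans (add_le_add (hbound n)
          (hbound (n + k)))) le_rfl)
    _ = 2 * B + k * |e| := by ring

end Ruelle

theorem iterated_cR_operator_stable_under_shift_of_time_general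
    [MetricSpace M] [CompactSpace M] [MeasurableSpace M] [BorelSpace M]
    (hdiam : ∀ a b : M, dist a b ≤ 1)
    (θ : ℝ) (hθ : θ ∈ Set.Ioo (0 : ℝ) 1)
    (m : Measure M) [IsProbabilityMeasure m]
    (f V : (ℕ → M) → ℝ) (hf : IsHolder θ f)
    (hV : IsCalibrated f V)
    (h : ℝ → (ℕ → M) → ℝ) (hhpos : ∀ c > (0 : ℝ), ∀ x, 0 < h c x)
    (hhcont : ∀ c > (0 : ℝ), Continuous (h c))
    (βc : ℝ → ℝ)
    (g : ℝ → (ℕ → M) → ℝ)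
    (hg : ∀ c > (0 : ℝ), ∀ x, g c x =
      c * f x + Real.log (h c x) - Real.log (h c (shift x)) - Real.log (βc c))
    (hnorm : ∀ c > (0 : ℝ), ∀ x, Ruelle m (g c) (fun _ => 1) x = 1)
    (hsub : ∀ ε > (0 : ℝ), ∃ N : ℝ, ∀ c > N, ∀ x, |Real.log (h c x) - c * V x| / c < ε)
    (hεc : Tendsto (fun c => (Real.log (βc c) - c * betaF f) / c) atTop (nhds 0))
    :
    ∀ k : ℕ, ∀ x : ℕ → M, ∀ ε > (0 : ℝ), ∃ N : ℝ, ∀ c > N, ∀ n : ℕ, (n : ℝ) > N →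
      |(1 / c) * Real.log ((Ruelle m (fun z => c * Rminus f V z))^[n] (fun _ => 1) x)
        - (1 / c) * Real.log ((Ruelle m (fun z => c * Rminus f V z))^[n + k] (fun _ => 1) x)
        - 0| < ε := by
  intro k x ε hε
  set δ := ε / (k + 3)
  have hδ : 0 < δ := by positivity
  obtain ⟨N₁, hN₁⟩ := hsub δ hδ
  obtain ⟨N₂, hN₂⟩ := Metric.tendsto_atTop.mp hεc δ hδ
  refine ⟨max (max N₁ N₂) 1, fun c hc n _ => ?_⟩
  simp only [gt_iff_lt, max_lt_iff] at hc
  have hc0 : 0 < c := one_pos.trans hc.2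
  set ψ := fun z => c * V z - Real.log (h c z)
  set e := Real.log (βc c) - c * betaF f
  have hlogh : Continuous fun z => Real.log (h c z) :=
    (hhcont c hc0).log fun z => (hhpos c hc0 z).ne'
  have hgc : Continuous (g c) := by
    rw [funext (hg c hc0)]
    exact (((hf.continuous hdiam hθ).const_smul c).add hlogh |>.sub
      (hlogh.comp continuous_shift)).sub continuous_const
  have hψB (z : ℕ → M) : |ψ z| ≤ c * δ := by
    rw [abs_sub_comm, ← div_le_iff₀' hc0]
    exact (hN₁ c hc.1.1 z).le
  have heB : |e| ≤ c * δ := by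
    have := hN₂ c hc.1.2.le
    rw [Real.dist_0_eq_abs, abs_div, abs_of_pos hc0, div_lt_iff₀' hc0] at this
    exact this.le
  have hcoh (y : ℕ → M) : c * Rminus f V y = g c y + ψ y - ψ (shift y) + e := by
    rw [hg c hc0]
    simp only [Rminus, ψ, e]
    ring
  have hlog_diff := abs_log_ruelle_iterate_sub_le_of_cohomologous m hgc
    ((hV.1.const_smul c).sub hlogh) (hnorm c hc0) hcoh hψB n k x
  calc _ = |Real.log ((Ruelle m (fun z => c * Rminus f V z))^[n] (fun _ => 1) x)
          - Real.log ((Ruelle m (fun z => c * Rminus f V z))^[n + k] (fun _ => 1) x)| / c := by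
        rw [sub_zero, ← mul_sub, abs_mul, abs_of_pos (one_div_pos.mpr hc0), one_div_mul_eq_div]
    _ ≤ (2 * (c * δ) + k * (c * δ)) / c := by gcongr; exact hlog_diff.trans (by gcongr)
    _ = (k + 2) * δ := by field_simp; ring
    _ < ε := by
        have : (k + 3) * δ = ε := by simp only [δ]; field_simp
        nlinarith

theorem iterated_cR_operator_stable_under_shift_of_time
    [MetricSpace M] [CompactSpace M] [ConnectedSpace M] [MeasurableSpace M] [BorelSpace M]
    (hdiam : ∀ a b : M, dist a b ≤ 1)
    (θ : ℝ) (hθ : θ ∈ Set.Ioo (0 : ℝ) 1)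
    (m : Measure M) [IsProbabilityMeasure m]
    (f V : (ℕ → M) → ℝ) (hf : IsHolder θ f)
    (huniq : ∃! μ : Measure (ℕ → M), IsMaximizing f μ)
    (hV : IsCalibrated f V)
    (h : ℝ → (ℕ → M) → ℝ) (hhpos : ∀ c > (0 : ℝ), ∀ x, 0 < h c x)
    (hhcont : ∀ c > (0 : ℝ), Continuous (h c))
    (βc : ℝ → ℝ) (hβc : ∀ c > (0 : ℝ), 0 < βc c)
    (g : ℝ → (ℕ → M) → ℝ)
    (hg : ∀ c > (0 : ℝ), ∀ x, g c x =
      c * f x + Real.log (h c x) - Real.log (h c (shift x)) - Real.log (βc c))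
    (hnorm : ∀ c > (0 : ℝ), ∀ x, Ruelle m (g c) (fun _ => 1) x = 1)
    (hsub : ∀ ε > (0 : ℝ), ∃ N : ℝ, ∀ c > N, ∀ x, |Real.log (h c x) - c * V x| / c < ε)
    (hεc : Tendsto (fun c => (Real.log (βc c) - c * betaF f) / c) atTop (nhds 0))
    :
    ∀ k : ℕ, ∀ x : ℕ → M, ∀ ε > (0 : ℝ), ∃ N : ℝ, ∀ c > N, ∀ n : ℕ, (n : ℝ) > N →
      |(1 / c) * Real.log ((Ruelle m (fun z => c * Rminus f V z))^[n] (fun _ => 1) x)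
        - (1 / c) * Real.log ((Ruelle m (fun z => c * Rminus f V z))^[n + k] (fun _ => 1) x)
        - 0| < ε :=
  iterated_cR_operator_stable_under_shift_of_time_general hdiam θ hθ m f V hf hV h hhpos hhcont βc g
    hg hnorm hsub hεc

end GXY
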